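/- Let p : L^n → L be a function on a bounded chain L. The following are equivalent: (i) p is a polynomial function; (ii) p is median decomposable, i.e., p(x) = med(p(x_k^0), x_k, p(x_k^1)) for every x ∈ L^n and every k ∈ {1,…,n}; (iii) p is order-preserving and is cl(ran(p))-min homogeneous and cl(ran(p))-max homogeneous; (iv) p is order-preserving, range-idempotent, horizontally minitive and horizontally maxitive. -/

import Mathlib

open Function

/-- A lattice polynomial function on a chain `M`: a member of the smallest set of `n`-ary
functions containing all projections and constants and closed under pointwise `⊓` and `⊔`. -/
inductive IsLatticePolynomial {M : Type*} [LinearOrder M] {n : ℕ} :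
    ((Fin n → M) → M) → Prop
  | proj (i : Fin n) : IsLatticePolynomial fun x => x i
  | const (c : M) : IsLatticePolynomial fun _ => c
  | inf {p q : (Fin n → M) → M} :
      IsLatticePolynomial p → IsLatticePolynomial q →
      IsLatticePolynomial fun x => p x ⊓ q x
  | sup {p q : (Fin n → M) → M} :
      IsLatticePolynomial p → IsLatticePolynomial q →
      IsLatticePolynomial fun x => p x ⊔ q x

/-- A Sugeno integral: an idempotent lattice polynomial function. -/
def IsSugenoIntegral {M : Type*} [LinearOrder M] {n : ℕ} (q : (Fin n → M) → M) : Prop :=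
  IsLatticePolynomial q ∧ ∀ c : M, q (fun _ => c) = c

/-- `φ` satisfies the boundary conditions: `φ 0 ≤ φ x ≤ φ 1` for all `x`. -/
def BoundaryCond {α : Type*} {M : Type*} [LE α] [OrderTop α] [OrderBot α] [Preorder M]
    (φ : α → M) : Prop :=
  ∀ x : α, φ ⊥ ≤ φ x ∧ φ x ≤ φ ⊤

/-- The median of three elements of a lattice. -/
def med {α : Type*} [Lattice α] (a b c : α) : α :=
  (a ⊓ b) ⊔ (a ⊓ c) ⊔ (b ⊓ c)

/-- Two `n`-tuples are comonotonic if some permutation sorts both simultaneously. -/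
def Comonotone {M : Type*} [Preorder M] {n : ℕ} (y y' : Fin n → M) : Prop :=
  ∃ σ : Equiv.Perm (Fin n), Monotone (y ∘ σ) ∧ Monotone (y' ∘ σ)

section PiDefs

variable {n : ℕ} {M : Type*} {L : Fin n → Type*}
variable [∀ i, LinearOrder (L i)] [∀ i, BoundedOrder (L i)]
variable [LinearOrder M] [BoundedOrder M]

/-- A pseudo-polynomial function: composition of a lattice polynomial function with unary
maps satisfying the boundary conditions. -/
def IsPseudoPolynomial (f : (∀ i, L i) → M) : Prop :=
  ∃ (p : (Fin n → M) → M) (φ : ∀ i, L i → M),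
    IsLatticePolynomial p ∧ (∀ i, BoundaryCond (φ i)) ∧
      ∀ x, f x = p fun i => φ i (x i)

/-- A pseudo-Sugeno integral: composition of a Sugeno integral with unary maps satisfying
the boundary conditions. -/
def IsPseudoSugenoIntegral (f : (∀ i, L i) → M) : Prop :=
  ∃ (q : (Fin n → M) → M) (φ : ∀ i, L i → M),
    IsSugenoIntegral q ∧ (∀ i, BoundaryCond (φ i)) ∧
      ∀ x, f x = q fun i => φ i (x i)

/-- A Sugeno utility function: composition of a Sugeno integral with local utility
(order-preserving) functions. -/
def IsSugenoUtility (f : (∀ i, L i) → M) : Prop :=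
  ∃ (q : (Fin n → M) → M) (φ : ∀ i, L i → M),
    IsSugenoIntegral q ∧ (∀ i, Monotone (φ i)) ∧
      ∀ x, f x = q fun i => φ i (x i)

/-- `f` is pseudo-median decomposable w.r.t. the unary maps `φ`. -/
def PseudoMedianDecomp (f : (∀ i, L i) → M) (φ : ∀ i, L i → M) : Prop :=
  ∀ (x : ∀ i, L i) (k : Fin n),
    f x = med (f (update x k ⊥)) (φ k (x k)) (f (update x k ⊤))

/-- `d ∈ φ̄⁻¹(c)`: all components of `d` are mapped to `c` by the corresponding `φ i`. -/
def FiberAll (φ : ∀ i, L i → M) (c : M) (d : ∀ i, L i) : Prop :=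
  ∀ i, φ i (d i) = c

/-- `f` is pseudo-min homogeneous w.r.t. `φ` with common range `R`. -/
def PseudoMinHomog (f : (∀ i, L i) → M) (φ : ∀ i, L i → M) (R : Set M) : Prop :=
  ∀ (x : ∀ i, L i), ∀ c ∈ R, ∀ d : ∀ i, L i, FiberAll φ c d →
    f (fun i => x i ⊓ d i) = f x ⊓ c

/-- `f` is pseudo-max homogeneous w.r.t. `φ` with common range `R`. -/
def PseudoMaxHomog (f : (∀ i, L i) → M) (φ : ∀ i, L i → M) (R : Set M) : Prop :=
  ∀ (x : ∀ i, L i), ∀ c ∈ R, ∀ d : ∀ i, L i, FiberAll φ c d →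
    f (fun i => x i ⊔ d i) = f x ⊔ c

/-- Condition (PI): `f d = c` whenever `d ∈ φ̄⁻¹(c)`, `c ∈ R`. -/
def PseudoPI (f : (∀ i, L i) → M) (φ : ∀ i, L i → M) (R : Set M) : Prop :=
  ∀ c ∈ R, ∀ d : ∀ i, L i, FiberAll φ c d → f d = c

/-- `[x]_d`: the tuple whose `i`th component is `0` if `x i ≤ d i`, and `x i` otherwise. -/
def cutBelow (x d : ∀ i, L i) : ∀ i, L i := fun i => if x i ≤ d i then ⊥ else x i

/-- `[x]^d`: the tuple whose `i`th component is `1` if `x i ≥ d i`, and `x i` otherwise. -/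
def cutAbove (x d : ∀ i, L i) : ∀ i, L i := fun i => if d i ≤ x i then ⊤ else x i

/-- `f` is pseudo-horizontally maxitive w.r.t. `φ` with common range `R`. -/
def PseudoHorizMax (f : (∀ i, L i) → M) (φ : ∀ i, L i → M) (R : Set M) : Prop :=
  ∀ (x : ∀ i, L i), ∀ c ∈ R, ∀ d : ∀ i, L i, FiberAll φ c d →
    f x = f (fun i => x i ⊓ d i) ⊔ f (cutBelow x d)

/-- `f` is pseudo-horizontally minitive w.r.t. `φ` with common range `R`. -/
def PseudoHorizMin (f : (∀ i, L i) → M) (φ : ∀ i, L i → M) (R : Set M) : Prop :=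
  ∀ (x : ∀ i, L i), ∀ c ∈ R, ∀ d : ∀ i, L i, FiberAll φ c d →
    f x = f (fun i => x i ⊔ d i) ⊓ f (cutAbove x d)

/-- `f` is pseudo-comonotonic minitive w.r.t. `φ`. -/
def PseudoComonMin (f : (∀ i, L i) → M) (φ : ∀ i, L i → M) : Prop :=
  ∀ x x' : ∀ i, L i,
    Comonotone (fun i => φ i (x i)) (fun i => φ i (x' i)) →
      f (fun i => x i ⊓ x' i) = f x ⊓ f x'

/-- `f` is pseudo-comonotonic maxitive w.r.t. `φ`. -/
def PseudoComonMax (f : (∀ i, L i) → M) (φ : ∀ i, L i → M) : Prop :=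
  ∀ x x' : ∀ i, L i,
    Comonotone (fun i => φ i (x i)) (fun i => φ i (x' i)) →
      f (fun i => x i ⊔ x' i) = f x ⊔ f x'

/-- The disjunctive normal form polynomial determined by the values of `f` on the
characteristic vectors `e_I`: `y ↦ ⋁_{I ⊆ [n]} (f(e_I) ∧ ⋀_{i ∈ I} y i)`. -/
def qDNF (f : (∀ i, L i) → M) : (Fin n → M) → M :=
  fun y => Finset.univ.sup fun I : Finset (Fin n) =>
    f (fun i => if i ∈ I then ⊤ else ⊥) ⊓ I.inf y

end PiDefs

section ChainDefs

variable {n : ℕ} {M : Type*} [LinearOrder M] [BoundedOrder M]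

/-- The DNF polynomial `y ↦ ⋁_{I ⊆ [n]} (p(e_I) ∧ ⋀_{i ∈ I} y i)` for `p : M^n → M`. -/
def polyDNF (p : (Fin n → M) → M) : (Fin n → M) → M :=
  fun y => Finset.univ.sup fun I : Finset (Fin n) =>
    p (fun i => if i ∈ I then ⊤ else ⊥) ⊓ I.inf y

/-- The convex hull of the range of `p` (in a chain). -/
def clRan (p : (Fin n → M) → M) : Set M :=
  {c : M | ∃ a ∈ Set.range p, ∃ b ∈ Set.range p, a ≤ c ∧ c ≤ b}

/-- Median decomposability of `p : M^n → M`. -/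
def MedianDecomp (p : (Fin n → M) → M) : Prop :=
  ∀ (x : Fin n → M) (k : Fin n),
    p x = med (p (update x k ⊥)) (x k) (p (update x k ⊤))

/-- `S`-min homogeneity: `p(x ∧ c) = p(x) ∧ c` for all `c ∈ S`. -/
def MinHomogOn (p : (Fin n → M) → M) (S : Set M) : Prop :=
  ∀ (x : Fin n → M), ∀ c ∈ S, p (fun i => x i ⊓ c) = p x ⊓ c

/-- `S`-max homogeneity: `p(x ∨ c) = p(x) ∨ c` for all `c ∈ S`. -/
def MaxHomogOn (p : (Fin n → M) → M) (S : Set M) : Prop :=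
  ∀ (x : Fin n → M), ∀ c ∈ S, p (fun i => x i ⊔ c) = p x ⊔ c

/-- Range-idempotence: `p(c,…,c) = c` for every `c` in the convex hull of the range. -/
def RangeIdempotent (p : (Fin n → M) → M) : Prop :=
  ∀ c ∈ clRan p, p (fun _ => c) = c

/-- Horizontal minitivity: `p(x) = p(x ∨ c) ∧ p([x]^c)`. -/
def HorizMin (p : (Fin n → M) → M) : Prop :=
  ∀ (x : Fin n → M) (c : M),
    p x = p (fun i => x i ⊔ c) ⊓ p (fun i => if c ≤ x i then ⊤ else x i)

/-- Horizontal maxitivity: `p(x) = p(x ∧ c) ∨ p([x]_c)`. -/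
def HorizMax (p : (Fin n → M) → M) : Prop :=
  ∀ (x : Fin n → M) (c : M),
    p x = p (fun i => x i ⊓ c) ⊔ p (fun i => if x i ≤ c then ⊥ else x i)

end ChainDefs

/-!
Lattice polynomials are median decomposable by induction on their construction. Conversely,
median decomposition at one coordinate at a time shows that a median decomposable `p` is
determined by its values on the Boolean vectors `e_I`, so `p` coincides with its disjunctive
normal form `⋁_I (p e_I ∧ ⋀_{i ∈ I} x_i)`; this gives (ii) ⇒ (i), and min homogeneity on
`cl(ran p) = [p 0, p 1]` is read off the normal form. Reversing the order of `L` preserves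
conditions (ii)–(iv) while exchanging min and max, so max homogeneity, horizontal minitivity and
the lower half of median decomposability are duals of their counterparts. Horizontal maxitivity
at `c = x_k` gives the upper half `p x ≤ med (p x_k^0) x_k (p x_k^1)`, because range-idempotence
bounds `p (x ∧ x_k) ≤ p (x_k, …, x_k)` by `p 0 ∨ x_k`.
-/

open OrderDual (toDual ofDual)

section Median
variable {α : Type*}

theorem med_comm [Lattice α] (a b c : α) : med a b c = med c b a := by
  unfold med; ac_rfl

theorem med_of_le [Lattice α] {a c : α} (b : α) (h : a ≤ c) : med a b c = a ⊔ b ⊓ c := by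
  rw [med, inf_eq_left.2 h, sup_eq_right.2 (inf_le_left : a ⊓ b ≤ a)]

theorem med_of_le' [DistribLattice α] {a c : α} (b : α) (h : a ≤ c) :
    med a b c = (a ⊔ b) ⊓ c := by
  rw [med_of_le b h, sup_inf_left, sup_eq_right.2 h]

theorem med_toDual [DistribLattice α] (a b c : α) :
    med (toDual a) (toDual b) (toDual c) = toDual (med a b c) := by
  show (a ⊔ b) ⊓ (a ⊔ c) ⊓ (b ⊔ c) = med a b c
  rw [← sup_inf_left, inf_sup_right, inf_sup_left,
    inf_eq_left.2 (inf_le_left.trans le_sup_left), med]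

theorem med_monotone_middle [Lattice α] (a c : α) : Monotone fun b => med a b c :=
  fun _ _ h => sup_le_sup (sup_le_sup_right (inf_le_inf_left a h) _) (inf_le_inf_right c h)

end Median

theorem monotone_of_monotone_update {ι : Type*} [Fintype ι] [DecidableEq ι] {α : ι → Type*}
    [∀ i, Preorder (α i)] {β : Type*} [Preorder β] {f : (∀ i, α i) → β}
    (h : ∀ x i, Monotone fun a => f (update x i a)) : Monotone f := by
  intro x y hxy
  suffices ∀ s : Finset ι, f x ≤ f (s.piecewise y x) by simpa using this Finset.univ
  intro s
  induction s using Finset.induction_on with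
  | empty => simp
  | insert k s hk ih =>
    calc f x ≤ f (s.piecewise y x) := ih
      _ = f (update (s.piecewise y x) k (x k)) := by
        rw [← Finset.piecewise_eq_of_notMem s y x hk, update_eq_self]
      _ ≤ f (update (s.piecewise y x) k (y k)) := h _ k (hxy k)
      _ = f ((insert k s).piecewise y x) := by rw [Finset.piecewise_insert]

section Polynomial

variable {n : ℕ} {M : Type*} [LinearOrder M]

theorem IsLatticePolynomial.monotone {p : (Fin n → M) → M} (h : IsLatticePolynomial p) :
    Monotone p := by
  induction h with
  | proj i => exact fun _ _ hxy => hxy i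
  | const c => exact monotone_const
  | inf _ _ ihp ihq => exact ihp.inf ihq
  | sup _ _ ihp ihq => exact ihp.sup ihq

theorem IsLatticePolynomial.finset_sup [OrderBot M] {ι : Type*} (s : Finset ι)
    {f : ι → (Fin n → M) → M} (hf : ∀ i ∈ s, IsLatticePolynomial (f i)) :
    IsLatticePolynomial fun x => s.sup fun i => f i x := by
  induction s using Finset.cons_induction with
  | empty => simpa using IsLatticePolynomial.const (⊥ : M)
  | cons a s ha ih =>
    simp only [Finset.sup_cons]
    exact (hf a (s.mem_cons_self a)).sup (ih fun i hi => hf i (Finset.mem_cons_of_mem hi))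

theorem IsLatticePolynomial.finset_inf [OrderTop M] {ι : Type*} (s : Finset ι)
    {f : ι → (Fin n → M) → M} (hf : ∀ i ∈ s, IsLatticePolynomial (f i)) :
    IsLatticePolynomial fun x => s.inf fun i => f i x := by
  induction s using Finset.cons_induction with
  | empty => simpa using IsLatticePolynomial.const (⊤ : M)
  | cons a s ha ih =>
    simp only [Finset.inf_cons]
    exact (hf a (s.mem_cons_self a)).inf (ih fun i hi => hf i (Finset.mem_cons_of_mem hi))

variable [BoundedOrder M] {p : (Fin n → M) → M}

theorem isLatticePolynomial_polyDNF (p : (Fin n → M) → M) : IsLatticePolynomial (polyDNF p) :=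
  .finset_sup _ fun I _ => (IsLatticePolynomial.const _).inf (.finset_inf I fun i _ => .proj i)

theorem IsLatticePolynomial.medianDecomp (h : IsLatticePolynomial p) : MedianDecomp p := by
  induction h with
  | proj i =>
    intro x k
    rcases eq_or_ne i k with rfl | hik
    · simp [med]
    · simp [update_of_ne hik, med]
  | const c => intro x k; simp [med]
  | @inf p q hp hq ihp ihq =>
    intro x k
    have hx : update x k ⊥ ≤ update x k ⊤ := update_le_update_iff'.2 bot_le
    show p x ⊓ q x = _
    rw [ihp x k, ihq x k, med_of_le' _ (hp.monotone hx), med_of_le' _ (hq.monotone hx),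
      med_of_le' _ (inf_le_inf (hp.monotone hx) (hq.monotone hx)), sup_inf_right]
    ac_rfl
  | @sup p q hp hq ihp ihq =>
    intro x k
    have hx : update x k ⊥ ≤ update x k ⊤ := update_le_update_iff'.2 bot_le
    show p x ⊔ q x = _
    rw [ihp x k, ihq x k, med_of_le _ (hp.monotone hx), med_of_le _ (hq.monotone hx),
      med_of_le _ (sup_le_sup (hp.monotone hx) (hq.monotone hx)), inf_sup_left]
    ac_rfl

theorem MedianDecomp.monotone (h : MedianDecomp p) : Monotone p :=
  monotone_of_monotone_update fun x k a b hab => by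
    dsimp only
    rw [h (update x k a) k, h (update x k b) k]
    simp only [update_idem, update_self]
    exact med_monotone_middle _ _ hab

theorem MedianDecomp.eq_of_forall_boolean {q : (Fin n → M) → M} (hp : MedianDecomp p)
    (hq : MedianDecomp q) (h : ∀ x : Fin n → M, (∀ i, x i = ⊥ ∨ x i = ⊤) → p x = q x) :
    p = q := by
  suffices ∀ s : Finset (Fin n), ∀ x : Fin n → M, (∀ i ∉ s, x i = ⊥ ∨ x i = ⊤) → p x = q x from
    funext fun x => this Finset.univ x (by simp)
  intro s
  induction s using Finset.induction_on with
  | empty => simpa using h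
  | insert k s hk ih =>
    intro x hx
    have hupdate (b : M) (hb : b = ⊥ ∨ b = ⊤) (i : Fin n) (hi : i ∉ s) :
        update x k b i = ⊥ ∨ update x k b i = ⊤ := by
      rcases eq_or_ne i k with rfl | hik
      · simpa using hb
      · rw [update_of_ne hik]
        exact hx i (by simp [hik, hi])
    rw [hp x k, hq x k, ih _ (hupdate ⊥ (.inl rfl)), ih _ (hupdate ⊤ (.inr rfl))]

theorem polyDNF_apply_indicator (hp : Monotone p) (I : Finset (Fin n)) :
    polyDNF p (fun i => if i ∈ I then ⊤ else ⊥) = p (fun i => if i ∈ I then ⊤ else ⊥) := by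
  apply le_antisymm
  · refine Finset.sup_le fun J _ => ?_
    by_cases hJ : J ⊆ I
    · refine inf_le_of_left_le (hp fun i => ?_)
      by_cases hi : i ∈ J
      · simp [hi, hJ hi]
      · simp [hi]
    · obtain ⟨j, hjJ, hjI⟩ := Finset.not_subset.1 hJ
      exact inf_le_of_right_le ((Finset.inf_le hjJ).trans (by simp [hjI]))
  · refine le_trans (le_of_eq ?_) (Finset.le_sup (Finset.mem_univ I))
    simp +contextual

theorem MedianDecomp.eq_polyDNF (h : MedianDecomp p) : p = polyDNF p :=
  h.eq_of_forall_boolean (isLatticePolynomial_polyDNF p).medianDecomp fun x hx => by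
    have hx' : x = fun i => if i ∈ Finset.univ.filter (x · = ⊤) then ⊤ else ⊥ := by
      funext i
      rcases hx i with h | h <;> simp [h]
    rw [hx', polyDNF_apply_indicator h.monotone]

theorem MedianDecomp.isLatticePolynomial (h : MedianDecomp p) : IsLatticePolynomial p := by
  rw [h.eq_polyDNF]
  exact isLatticePolynomial_polyDNF p

end Polynomial

section Chain

variable {n : ℕ} {M : Type*} [LinearOrder M] {p : (Fin n → M) → M}

def dualFun (p : (Fin n → M) → M) : (Fin n → Mᵒᵈ) → Mᵒᵈ :=
  fun x => toDual (p fun i => ofDual (x i))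

theorem monotone_dualFun (hp : Monotone p) : Monotone (dualFun p) :=
  fun _ _ hxy => hp hxy

theorem clRan_dualFun : clRan (dualFun p) = ofDual ⁻¹' clRan p := by
  ext c
  constructor <;> rintro ⟨a, ha, b, hb, hac, hcb⟩ <;> exact ⟨b, hb, a, ha, hcb, hac⟩

theorem minHomogOn_dualFun_iff :
    MinHomogOn (dualFun p) (clRan (dualFun p)) ↔ MaxHomogOn p (clRan p) := by
  rw [clRan_dualFun]
  rfl

theorem maxHomogOn_dualFun_iff :
    MaxHomogOn (dualFun p) (clRan (dualFun p)) ↔ MinHomogOn p (clRan p) := by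
  rw [clRan_dualFun]
  rfl

theorem rangeIdempotent_dualFun_iff : RangeIdempotent (dualFun p) ↔ RangeIdempotent p := by
  rw [RangeIdempotent, clRan_dualFun]
  rfl

variable [BoundedOrder M]

theorem clRan_eq_Icc (hp : Monotone p) :
    clRan p = Set.Icc (p fun _ => ⊥) (p fun _ => ⊤) := by
  ext c
  constructor
  · rintro ⟨_, ⟨u, rfl⟩, _, ⟨v, rfl⟩, hu, hv⟩
    exact ⟨(hp fun _ => bot_le).trans hu, hv.trans (hp fun _ => le_top)⟩
  · rintro ⟨h0, h1⟩
    exact ⟨_, ⟨_, rfl⟩, _, ⟨_, rfl⟩, h0, h1⟩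

theorem horizMax_dualFun_iff : HorizMax (dualFun p) ↔ HorizMin p := Iff.rfl

theorem medianDecomp_dualFun (h : MedianDecomp p) : MedianDecomp (dualFun p) := fun x k => by
  let y : Fin n → M := fun i => ofDual (x i)
  show toDual (p y) = med (toDual (p (update y k ⊤))) (toDual (y k)) (toDual (p (update y k ⊥)))
  rw [med_toDual, med_comm, ← h]

theorem MedianDecomp.minHomogOn (h : MedianDecomp p) : MinHomogOn p (clRan p) := by
  intro x c hc
  rw [clRan_eq_Icc h.monotone] at hc
  rw [h.eq_polyDNF]
  simp only [polyDNF, Finset.sup_inf_distrib_right]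
  refine Finset.sup_congr rfl fun I _ => ?_
  rcases I.eq_empty_or_nonempty with rfl | hI
  · simpa using hc.1
  · rw [show (fun i => x i ⊓ c) = x ⊓ fun _ => c from rfl, Finset.inf_inf,
      Finset.inf_const hI, inf_assoc]

theorem MedianDecomp.maxHomogOn (h : MedianDecomp p) : MaxHomogOn p (clRan p) :=
  minHomogOn_dualFun_iff.1 (medianDecomp_dualFun h).minHomogOn

theorem rangeIdempotent_of_homogOn (hmin : MinHomogOn p (clRan p))
    (hmax : MaxHomogOn p (clRan p)) : RangeIdempotent p := fun c hc =>
  calc p (fun _ => c) = p (fun _ => (⊥ ⊔ c) ⊓ c) := by simp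
    _ = (p (fun _ => ⊥) ⊔ c) ⊓ c := by rw [hmin _ c hc, hmax _ c hc]
    _ = c := inf_eq_right.2 le_sup_right

theorem horizMax_of_homogOn (hm : Monotone p) (hmin : MinHomogOn p (clRan p))
    (hmax : MaxHomogOn p (clRan p)) : HorizMax p := by
  intro x c
  set z : Fin n → M := fun i => if x i ≤ c then ⊥ else x i
  set m := p (fun i => x i ⊓ c) ⊔ p z
  have hzx : z ≤ x := fun i => by dsimp only [z]; split_ifs <;> simp
  refine le_antisymm ?_ (sup_le (hm fun i => inf_le_left) (hm hzx))
  rw [clRan_eq_Icc hm] at hmin hmax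
  have hm0 : p (fun _ => ⊥) ≤ m := le_sup_of_le_left (hm fun _ => bot_le)
  have hm1 : m ≤ p (fun _ => ⊤) := sup_le (hm fun _ => le_top) (hm fun _ => le_top)
  rcases le_or_gt c m with hcm | hmc
  · have hxz : x ≤ fun i => z i ⊔ m := fun i => by
      dsimp only [z]
      split_ifs with h
      exacts [le_sup_of_le_right (h.trans hcm), le_sup_left]
    calc p x ≤ p (fun i => z i ⊔ m) := hm hxz
      _ = p z ⊔ m := hmax z m ⟨hm0, hm1⟩
      _ = m := sup_eq_right.2 le_sup_right
  · -- `c` itself may lie above `cl(ran p)`; its truncation `c ⊓ p 1` does not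
    have hd : p (fun _ => ⊥) ≤ c ⊓ p (fun _ => ⊤) :=
      le_inf (hm0.trans hmc.le) (hm fun _ => bot_le)
    have hxd : p x ⊓ (c ⊓ p (fun _ => ⊤)) ≤ m := by
      rw [← hmin x _ ⟨hd, inf_le_right⟩]
      exact le_sup_of_le_left (hm fun i => inf_le_inf_left _ inf_le_left)
    rcases inf_le_iff.1 hxd with h | h
    · exact h
    rcases inf_le_iff.1 h with h | h
    · exact absurd h hmc.not_ge
    · exact (hm fun _ => le_top).trans h

theorem horizMin_of_homogOn (hm : Monotone p) (hmin : MinHomogOn p (clRan p))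
    (hmax : MaxHomogOn p (clRan p)) : HorizMin p :=
  horizMax_dualFun_iff.1 <| horizMax_of_homogOn (monotone_dualFun hm)
    (minHomogOn_dualFun_iff.2 hmax) (maxHomogOn_dualFun_iff.2 hmin)

theorem RangeIdempotent.apply_const_le (hm : Monotone p) (hri : RangeIdempotent p) (t : M) :
    p (fun _ => t) ≤ p (fun _ => ⊥) ⊔ t := by
  rw [RangeIdempotent, clRan_eq_Icc hm] at hri
  rcases le_total t (p fun _ => ⊥) with h0 | h0
  · calc p (fun _ => t) ≤ p (fun _ => p fun _ => ⊥) := hm fun _ => h0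
      _ = p fun _ => ⊥ := hri _ ⟨le_rfl, hm fun _ => bot_le⟩
      _ ≤ _ := le_sup_left
  rcases le_total t (p fun _ => ⊤) with h1 | h1
  · exact (hri t ⟨h0, h1⟩).le.trans le_sup_right
  · exact (hm fun _ => le_top).trans (h1.trans le_sup_right)

theorem HorizMax.le_med (hm : Monotone p) (hri : RangeIdempotent p) (hmax : HorizMax p)
    (x : Fin n → M) (k : Fin n) : p x ≤ med (p (update x k ⊥)) (x k) (p (update x k ⊤)) := by
  rw [med_of_le' _ (hm (update_le_update_iff'.2 bot_le))]
  refine le_inf ?_ (hm (le_update_self_iff.2 le_top))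
  have hcut : p (fun i => if x i ≤ x k then ⊥ else x i) ≤ p (update x k ⊥) := hm fun i => by
    rcases eq_or_ne i k with rfl | hik
    · simp
    · rw [update_of_ne hik]
      split_ifs <;> simp
  have hlow : p (fun i => x i ⊓ x k) ≤ p (update x k ⊥) ⊔ x k :=
    calc p (fun i => x i ⊓ x k) ≤ p (fun _ => x k) := hm fun _ => inf_le_right
      _ ≤ p (fun _ => ⊥) ⊔ x k := hri.apply_const_le hm (x k)
      _ ≤ p (update x k ⊥) ⊔ x k := sup_le_sup_right (hm fun _ => bot_le) _
  rw [hmax x (x k)]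
  exact sup_le hlow (hcut.trans le_sup_left)

theorem HorizMin.med_le (hm : Monotone p) (hri : RangeIdempotent p) (hmin : HorizMin p)
    (x : Fin n → M) (k : Fin n) : med (p (update x k ⊥)) (x k) (p (update x k ⊤)) ≤ p x := by
  have h : toDual (p x) ≤
      med (toDual (p (update x k ⊤))) (toDual (x k)) (toDual (p (update x k ⊥))) :=
    HorizMax.le_med (monotone_dualFun hm) (rangeIdempotent_dualFun_iff.2 hri)
      (horizMax_dualFun_iff.2 hmin) (fun i => toDual (x i)) k
  rwa [med_toDual, OrderDual.toDual_le_toDual, med_comm] at h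

theorem medianDecomp_of_horiz (hm : Monotone p) (hri : RangeIdempotent p)
    (hmin : HorizMin p) (hmax : HorizMax p) : MedianDecomp p := fun x k =>
  le_antisymm (hmax.le_med hm hri x k) (hmin.med_le hm hri x k)

end Chain

/-- characterizations of polynomial functions on a bounded chain:
(i) polynomial ↔ (ii) median decomposable ↔ (iii) order-preserving and
`cl(ran p)`-min and -max homogeneous ↔ (iv) order-preserving, range-idempotent,
horizontally minitive and maxitive. -/
theorem polynomial_characterizations
    {n : ℕ} {M : Type*} [LinearOrder M] [BoundedOrder M] (p : (Fin n → M) → M) :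
    (IsLatticePolynomial p ↔ MedianDecomp p) ∧
    (IsLatticePolynomial p ↔
      Monotone p ∧ MinHomogOn p (clRan p) ∧ MaxHomogOn p (clRan p)) ∧
    (IsLatticePolynomial p ↔
      Monotone p ∧ RangeIdempotent p ∧ HorizMin p ∧ HorizMax p) := by
  have i_ii : IsLatticePolynomial p → MedianDecomp p := IsLatticePolynomial.medianDecomp
  have ii_i : MedianDecomp p → IsLatticePolynomial p := MedianDecomp.isLatticePolynomial
  have ii_iii (h : MedianDecomp p) :
      Monotone p ∧ MinHomogOn p (clRan p) ∧ MaxHomogOn p (clRan p) :=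
    ⟨h.monotone, h.minHomogOn, h.maxHomogOn⟩
  have iii_iv : Monotone p ∧ MinHomogOn p (clRan p) ∧ MaxHomogOn p (clRan p) →
      Monotone p ∧ RangeIdempotent p ∧ HorizMin p ∧ HorizMax p :=
    fun ⟨hm, hmin, hmax⟩ => ⟨hm, rangeIdempotent_of_homogOn hmin hmax,
      horizMin_of_homogOn hm hmin hmax, horizMax_of_homogOn hm hmin hmax⟩
  have iv_ii : Monotone p ∧ RangeIdempotent p ∧ HorizMin p ∧ HorizMax p → MedianDecomp p :=
    fun ⟨hm, hri, hmin, hmax⟩ => medianDecomp_of_horiz hm hri hmin hmax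
  exact ⟨⟨i_ii, ii_i⟩, ⟨ii_iii ∘ i_ii, ii_i ∘ iv_ii ∘ iii_iv⟩,
    ⟨iii_iv ∘ ii_iii ∘ i_ii, ii_i ∘ iv_ii⟩⟩
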